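/- Let F̃ : [0,1] → [0,1] be C-Lipschitz on an interval containing τ* and τ, let β* > C > 0, and suppose F̃(τ*) = β*·τ*, F(τ) = β*·τ, and sup over the relevant interval of |F(t) − F̃(t)| ≤ δ. Then |τ − τ*| ≤ δ/(β* − C). -/
import Mathlib

/-- Lemma 3: if `F̃` is `C`-Lipschitz on the interval between `τ` and `τ*`,
`sup |F − F̃| ≤ δ` there, `β* > C > 0`, and `F̃(τ*) = β* τ*`, `F(τ) = β* τ`, then
`|τ − τ*| ≤ δ/(β* − C)`. -/
theorem stmt_8 (F Ftilde : ℝ → ℝ) (τ τstar βstar C δ : ℝ)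
    (hτ : τ ∈ Set.Icc (0:ℝ) 1) (hτs : τstar ∈ Set.Icc (0:ℝ) 1)
    (hC : 0 < C) (hβC : C < βstar) (hδ : 0 ≤ δ)
    (hLip : ∀ s ∈ Set.Icc (min τ τstar) (max τ τstar),
      ∀ t ∈ Set.Icc (min τ τstar) (max τ τstar),
        |Ftilde s - Ftilde t| ≤ C * |s - t|)
    (hclose : ∀ t ∈ Set.Icc (min τ τstar) (max τ τstar), |F t - Ftilde t| ≤ δ)
    (hfix : Ftilde τstar = βstar * τstar) (hfix' : F τ = βstar * τ) :
    |τ - τstar| ≤ δ / (βstar - C) := by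
  have hτmem : τ ∈ Set.Icc (min τ τstar) (max τ τstar) :=
    ⟨min_le_left _ _, le_max_left _ _⟩
  have hτsmem : τstar ∈ Set.Icc (min τ τstar) (max τ τstar) :=
    ⟨min_le_right _ _, le_max_right _ _⟩
  have h1 := hclose τ hτmem
  have h2 := hLip τ hτmem τstar hτsmem
  have key : βstar * |τ - τstar| ≤ δ + C * |τ - τstar| := by
    have : βstar * |τ - τstar| = |F τ - Ftilde τstar| := by
      rw [hfix, hfix', ← mul_sub, abs_mul, abs_of_pos (hC.trans hβC)]
    rw [this]
    calc |F τ - Ftilde τstar| ≤ |F τ - Ftilde τ| + |Ftilde τ - Ftilde τstar| := by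
          apply abs_sub_le
      _ ≤ δ + C * |τ - τstar| := add_le_add h1 h2
  rw [le_div_iff₀ (by linarith)]
  nlinarith [abs_nonneg (τ - τstar)]
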